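/- Fix i ∈ {1,…,r} with r ≥ 3. The subgroup of GL_r(ℤ) generated by {X_{ik} : k ≠ i} ∪ {X_{ji}² : j ≠ i} ∪ {T_j : j = 1,…,r} contains the principal congruence subgroup Γ₂ of level two. -/

import Mathlib

/-!
An element of `Γ₂` is reduced to the identity one column at a time by left multiplication with
even elementary matrices `E_pq(2s)` and sign changes `T c`. While column `c` is being cleared, the
parity pattern of `Γ₂` (odd diagonal, even off-diagonal entries) makes two nonzero entries of the
column differ in absolute value, so a Euclidean step `row p += 2s · row q` strictly decreases
`∑ⱼ |A j c|`. Taking the pivot row `q` outside the set `S` of finished columns keeps those columns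
equal to the standard basis vectors. Once the rows outside `S ∪ {c}` vanish in column `c`, the
entry `A c c` is a unit, hence `±1`; it then clears the rows of `S`, and `T c` fixes its sign.

The given generators produce every `E_ab(2)`: directly if `a = i` or `b = i`, and otherwise as the
commutator `⁅E_ai(2), E_ib(1)⁆`.
-/

/-- The elementary matrix `X i j` in `SL_r(ℤ)`: identity plus an extra 1 in position (i,j). -/
def X {r : ℕ} (i j : Fin r) (h : i ≠ j) : Matrix.SpecialLinearGroup (Fin r) ℤ :=
  ⟨Matrix.transvection i j 1, Matrix.det_transvection_of_ne i j h 1⟩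

/-- The diagonal matrix `T i` in `GL_r(ℤ)`: identity with a `-1` in the i-th diagonal entry. -/
def T {r : ℕ} (i : Fin r) : GL (Fin r) ℤ :=
  ⟨Matrix.diagonal (fun k => if k = i then -1 else 1),
   Matrix.diagonal (fun k => if k = i then -1 else 1),
   by
    ext p q
    by_cases hp : p = i <;> by_cases hq : q = i <;> by_cases h : p = q <;>
      simp_all [Matrix.diagonal_mul_diagonal, Matrix.diagonal_apply, Matrix.one_apply],
   by
    ext p q
    by_cases hp : p = i <;> by_cases hq : q = i <;> by_cases h : p = q <;>
      simp_all [Matrix.diagonal_mul_diagonal, Matrix.diagonal_apply, Matrix.one_apply]⟩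

/-- The principal congruence subgroup of level 2 in `GL_r(ℤ)`, as the kernel of
reduction modulo 2. -/
def Gamma2 (r : ℕ) : Subgroup (GL (Fin r) ℤ) :=
  (Units.map ((Int.castRingHom (ZMod 2)).mapMatrix.toMonoidHom)).ker

open Matrix Matrix.SpecialLinearGroup
open scoped commutatorElement

section Transvection

variable {ι F : Type*} [DecidableEq ι] [Fintype ι] [CommRing F]

lemma coe_transvection {i j : ι} (hij : i ≠ j) (b : F) :
    (transvection hij b : Matrix ι ι F) = Matrix.transvection i j b :=
  rfl

lemma transvection_zpow {i j : ι} (hij : i ≠ j) (b : F) (n : ℤ) :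
    transvection hij b ^ n = transvection hij (n • b) := by
  induction n using Int.induction_on with
  | zero => simp
  | succ k ih => rw [_root_.zpow_add_one, ih, ← transvection_add, add_smul, one_smul]
  | pred k ih =>
    rw [_root_.zpow_sub_one, ih, transvection_inv, ← transvection_add, sub_smul, one_smul,
      sub_eq_add_neg]

lemma commutator_transvection {i j k : ι} (hij : i ≠ j) (hjk : j ≠ k) (hik : i ≠ k) (b c : F) :
    ⁅transvection hij b, transvection hjk c⁆ = transvection hik (b * c) := by
  refine Subtype.ext ?_
  simp [commutatorElement_def, transvection_inv, transvection_coe, mul_add, add_mul, hij.symm,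
    hjk.symm, hik.symm, ← single_neg]
  abel

end Transvection

section ColumnStabilizer

variable {n R : Type*} [DecidableEq n] [Fintype n] [CommRing R]

lemma mul_apply_of_col_eq_one {M B : Matrix n n R} {s : n}
    (hB : ∀ k, B k s = (1 : Matrix n n R) k s) (j : n) : (M * B) j s = M j s :=
  calc (M * B) j s = (M * (1 : Matrix n n R)) j s := by simp only [mul_apply, hB]
    _ = M j s := by rw [Matrix.mul_one]

def columnStabilizer (S : Finset n) : Subgroup (GL n R) where
  carrier := {A | ∀ s ∈ S, ∀ j, A j s = (1 : Matrix n n R) j s}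
  one_mem' _ _ _ := rfl
  mul_mem' {A B} hA hB s hs j := by
    rw [Units.val_mul, mul_apply_of_col_eq_one (hB s hs), hA s hs]
  inv_mem' {A} hA s hs j := by
    rw [← mul_apply_of_col_eq_one (M := (A⁻¹ : GL n R)) (hA s hs), A.inv_mul]

lemma mem_columnStabilizer {S : Finset n} {A : GL n R} :
    A ∈ columnStabilizer S ↔ ∀ s ∈ S, ∀ j, A j s = (1 : Matrix n n R) j s :=
  Iff.rfl

lemma mem_columnStabilizer_insert {S : Finset n} {c : n} {A : GL n R} :
    A ∈ columnStabilizer (insert c S) ↔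
      A ∈ columnStabilizer S ∧ ∀ j, A j c = (1 : Matrix n n R) j c := by
  simp only [mem_columnStabilizer, Finset.forall_mem_insert, and_comm]

lemma mem_columnStabilizer_insert_of_apply {S : Finset n} {c : n} {A : GL n R}
    (hA : A ∈ columnStabilizer S) (hcol : ∀ j ≠ c, A j c = 0) (hcc : A c c = 1) :
    A ∈ columnStabilizer (insert c S) := by
  refine mem_columnStabilizer_insert.2 ⟨hA, fun j ↦ ?_⟩
  obtain rfl | hj := eq_or_ne j c
  · rw [hcc, one_apply_eq]
  · rw [hcol j hj, one_apply_ne hj]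

lemma columnStabilizer_univ : columnStabilizer (Finset.univ : Finset n) = (⊥ : Subgroup (GL n R)) :=
  (Subgroup.eq_bot_iff_forall _).2 fun _ hA ↦
    Units.ext <| Matrix.ext fun j s ↦ hA s (Finset.mem_univ s) j

lemma toGL_transvection_mem_columnStabilizer {S : Finset n} {p q : n} (hpq : p ≠ q) (hq : q ∉ S)
    (b : R) : toGL (transvection hpq b) ∈ columnStabilizer S := fun s hs j ↦ by
  simp [transvection_coe, show q ≠ s by rintro rfl; exact hq hs]

lemma isUnit_apply_self_of_mem_columnStabilizer {S : Finset n} {A : GL n R}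
    (hA : A ∈ columnStabilizer S) {c : n} (hc : c ∉ S) (hcol : ∀ j ∉ S, j ≠ c → A j c = 0) :
    IsUnit (A c c) := by
  have key : (A⁻¹ : GL n R) c c * A c c = 1 := by
    rw [← one_apply_eq (α := R) c, ← A.inv_mul, mul_apply, Finset.sum_eq_single c]
    · intro j _ hjc
      by_cases hj : j ∈ S
      · rw [inv_mem hA j hj c, one_apply_ne (ne_of_mem_of_not_mem hj hc).symm, zero_mul]
      · rw [hcol j hj hjc, mul_zero]
    · simp
  exact .of_mul_eq_one_right _ key

end ColumnStabilizer

lemma exists_natAbs_add_two_mul_lt {a b : ℤ} (ha : a ≠ 0) (hab : a.natAbs < b.natAbs) :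
    ∃ s : ℤ, (b + 2 * s * a).natAbs < b.natAbs := by
  refine ⟨if (0 ≤ a) = (0 ≤ b) then -1 else 1, ?_⟩
  split_ifs with h <;> simp only [eq_iff_iff] at h <;> omega

def columnWeight {n : Type*} [DecidableEq n] [Fintype n] (c : n) (A : GL n ℤ) : ℕ :=
  ∑ j, (A j c).natAbs

lemma columnWeight_toGL_transvection_mul_lt {n : Type*} [DecidableEq n] [Fintype n] {p q : n}
    (hpq : p ≠ q) {b : ℤ} {c : n} {A : GL n ℤ}
    (hb : (A p c + b * A q c).natAbs < (A p c).natAbs) :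
    columnWeight c (toGL (transvection hpq b) * A) < columnWeight c A := by
  refine Finset.sum_lt_sum (fun j _ ↦ ?_) ⟨p, Finset.mem_univ p, ?_⟩
  · obtain rfl | hj := eq_or_ne j p
    · simpa [coe_transvection] using hb.le
    · simp [coe_transvection, hj]
  · simpa [coe_transvection] using hb

section Gamma2

variable {r : ℕ}

lemma mem_Gamma2_iff {A : GL (Fin r) ℤ} :
    A ∈ Gamma2 r ↔ ∀ p q, ((A p q : ℤ) : ZMod 2) = (1 : Matrix (Fin r) (Fin r) (ZMod 2)) p q := by
  simp [Gamma2, Units.ext_iff, ← Matrix.ext_iff]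

lemma odd_apply_self_of_mem_Gamma2 {A : GL (Fin r) ℤ} (hA : A ∈ Gamma2 r) (p : Fin r) :
    Odd (A p p) := by
  simpa [ZMod.intCast_eq_one_iff_odd] using mem_Gamma2_iff.1 hA p p

lemma even_apply_of_mem_Gamma2 {A : GL (Fin r) ℤ} (hA : A ∈ Gamma2 r) {p q : Fin r}
    (hpq : p ≠ q) : Even (A p q) := by
  simpa [ZMod.intCast_eq_zero_iff_even, hpq] using mem_Gamma2_iff.1 hA p q

lemma toGL_transvection_two_mem_Gamma2 {p q : Fin r} (hpq : p ≠ q) :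
    toGL (transvection hpq (2 : ℤ)) ∈ Gamma2 r := by
  refine mem_Gamma2_iff.2 fun a b ↦ ?_
  simp only [coe_GL_coe_matrix, transvection_coe, Matrix.add_apply, single_apply, one_apply]
  split_ifs <;> simp_all [show (2 : ZMod 2) = 0 from rfl]

lemma T_mem_Gamma2 (c : Fin r) : T c ∈ Gamma2 r :=
  mem_Gamma2_iff.2 fun a b ↦ by simp [T, diagonal_apply, one_apply]

lemma T_mul_apply (c : Fin r) (A : GL (Fin r) ℤ) (j k : Fin r) :
    (T c * A) j k = (if j = c then -1 else 1) * A j k := by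
  rw [Units.val_mul, T, diagonal_mul]

lemma T_mem_columnStabilizer {S : Finset (Fin r)} {c : Fin r} (hc : c ∉ S) :
    T c ∈ columnStabilizer S := fun s hs j ↦ by
  have hsc : s ≠ c := by rintro rfl; exact hc hs
  obtain rfl | hj := eq_or_ne j s
  · simp [T, hsc]
  · simp [T, one_apply, hj]

def evenElementarySubgroup (r : ℕ) : Subgroup (GL (Fin r) ℤ) :=
  Subgroup.closure
    ({A | ∃ p q : Fin r, ∃ h : p ≠ q, A = toGL (transvection h (2 : ℤ))} ∪ Set.range T)

lemma evenElementarySubgroup_le_Gamma2 : evenElementarySubgroup r ≤ Gamma2 r := by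
  rw [evenElementarySubgroup, Subgroup.closure_le]
  rintro _ (⟨p, q, h, rfl⟩ | ⟨c, rfl⟩)
  exacts [toGL_transvection_two_mem_Gamma2 h, T_mem_Gamma2 c]

lemma T_mem_evenElementarySubgroup (c : Fin r) : T c ∈ evenElementarySubgroup r :=
  Subgroup.subset_closure (Or.inr ⟨c, rfl⟩)

lemma toGL_transvection_two_mul_mem_evenElementarySubgroup {p q : Fin r} (h : p ≠ q) (s : ℤ) :
    toGL (transvection h (2 * s)) ∈ evenElementarySubgroup r := by
  have h2 : toGL (transvection h (2 : ℤ)) ∈ evenElementarySubgroup r :=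
    Subgroup.subset_closure (Or.inl ⟨p, q, h, rfl⟩)
  rw [mul_comm, ← smul_eq_mul, ← transvection_zpow, map_zpow]
  exact zpow_mem h2 s

lemma apply_self_eq_one_or_neg_one {S : Finset (Fin r)} {A : GL (Fin r) ℤ}
    (hA : A ∈ columnStabilizer S) {c : Fin r} (hc : c ∉ S) (hcol : ∀ j ∉ S, j ≠ c → A j c = 0) :
    A c c = 1 ∨ A c c = -1 :=
  Int.isUnit_iff.1 (isUnit_apply_self_of_mem_columnStabilizer hA hc hcol)

lemma exists_pivot {S : Finset (Fin r)} {A : GL (Fin r) ℤ} (hA : A ∈ Gamma2 r)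
    (hAS : A ∈ columnStabilizer S) {c : Fin r} (hc : c ∉ S) (hcol : ∃ j ≠ c, A j c ≠ 0) :
    ∃ p q, ∃ _ : p ≠ q, q ∉ S ∧ A q c ≠ 0 ∧ (A q c).natAbs < (A p c).natAbs := by
  have hodd := Nat.odd_iff.1 (odd_apply_self_of_mem_Gamma2 hA c).natAbs
  have heven {j} (hjc : j ≠ c) := Nat.even_iff.1 (even_apply_of_mem_Gamma2 hA hjc).natAbs
  by_cases hfree : ∃ j ∉ S, j ≠ c ∧ A j c ≠ 0
  · obtain ⟨j, hjS, hjc, hj0⟩ := hfree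
    have := heven hjc
    rcases lt_or_gt_of_ne (show (A c c).natAbs ≠ (A j c).natAbs by omega) with hlt | hlt
    · exact ⟨j, c, hjc, hc, Int.natAbs_ne_zero.1 (by omega), hlt⟩
    · exact ⟨c, j, hjc.symm, hjS, hj0, hlt⟩
  · push Not at hfree
    obtain ⟨j, hjc, hj0⟩ := hcol
    have hunit : (A c c).natAbs = 1 := by
      rcases apply_self_eq_one_or_neg_one hAS hc hfree with h | h <;> simp [h]
    have := heven hjc
    have := Int.natAbs_ne_zero.2 hj0
    exact ⟨j, c, hjc, hc, Int.natAbs_ne_zero.1 (by omega), by omega⟩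

lemma exists_mul_mem_columnStabilizer_insert {S : Finset (Fin r)} {c : Fin r} (hc : c ∉ S)
    {A : GL (Fin r) ℤ} (hA : A ∈ Gamma2 r) (hAS : A ∈ columnStabilizer S) :
    ∃ g ∈ evenElementarySubgroup r, g * A ∈ columnStabilizer (insert c S) := by
  induction hw : columnWeight c A using Nat.strong_induction_on generalizing A with
  | _ w ih =>
  by_cases hcol : ∀ j ≠ c, A j c = 0
  · rcases apply_self_eq_one_or_neg_one hAS hc (fun j _ ↦ hcol j) with h1 | h1
    · exact ⟨1, one_mem _, (one_mul A).symm ▸ mem_columnStabilizer_insert_of_apply hAS hcol h1⟩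
    · refine ⟨T c, T_mem_evenElementarySubgroup c,
        mem_columnStabilizer_insert_of_apply (mul_mem (T_mem_columnStabilizer hc) hAS) ?_ ?_⟩
      · intro j hj
        rw [T_mul_apply, hcol j hj, mul_zero]
      · rw [T_mul_apply, if_pos rfl, h1, neg_one_mul, neg_neg]
  · push Not at hcol
    obtain ⟨p, q, hpq, hq, hq0, hlt⟩ := exists_pivot hA hAS hc hcol
    obtain ⟨s, hs⟩ := exists_natAbs_add_two_mul_lt hq0 hlt
    have hg₀ := toGL_transvection_two_mul_mem_evenElementarySubgroup hpq s
    obtain ⟨g, hg, hgA⟩ := ih _ (hw ▸ columnWeight_toGL_transvection_mul_lt hpq hs)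
      (mul_mem (evenElementarySubgroup_le_Gamma2 hg₀) hA)
      (mul_mem (toGL_transvection_mem_columnStabilizer hpq hq _) hAS) rfl
    exact ⟨_, mul_mem hg hg₀, by rwa [mul_assoc]⟩

lemma mem_evenElementarySubgroup_of_mem_columnStabilizer_compl (U : Finset (Fin r))
    {A : GL (Fin r) ℤ} (hA : A ∈ Gamma2 r) (hAU : A ∈ columnStabilizer Uᶜ) :
    A ∈ evenElementarySubgroup r := by
  induction U using Finset.induction_on generalizing A with
  | empty =>
    rw [Finset.compl_empty, columnStabilizer_univ, Subgroup.mem_bot] at hAU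
    exact hAU ▸ one_mem _
  | insert c U hcU ih =>
    obtain ⟨g, hg, hgA⟩ := exists_mul_mem_columnStabilizer_insert
      (Finset.notMem_compl.2 (Finset.mem_insert_self c U)) hA hAU
    rw [Finset.insert_compl_insert hcU] at hgA
    exact (Subgroup.mul_mem_cancel_left _ hg).1
      (ih (mul_mem (evenElementarySubgroup_le_Gamma2 hg) hA) hgA)

lemma Gamma2_le_evenElementarySubgroup : Gamma2 r ≤ evenElementarySubgroup r :=
  fun _ hA ↦ mem_evenElementarySubgroup_of_mem_columnStabilizer_compl Finset.univ hA
    (by simp [mem_columnStabilizer])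

lemma X_eq_transvection {i j : Fin r} (h : i ≠ j) : X i j h = transvection h 1 :=
  rfl

lemma evenElementarySubgroup_le {i : Fin r} {H : Subgroup (GL (Fin r) ℤ)}
    (hrow : ∀ k (h : i ≠ k), (X i k h).toGL ∈ H) (hcol : ∀ j (h : j ≠ i), (X j i h).toGL ^ 2 ∈ H)
    (hT : ∀ j, T j ∈ H) : evenElementarySubgroup r ≤ H := by
  have hrow' (k : Fin r) (h : i ≠ k) (m : ℤ) : toGL (transvection h m) ∈ H := by
    simpa [X_eq_transvection, ← map_zpow, transvection_zpow] using zpow_mem (hrow k h) m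
  have hcol' (j : Fin r) (h : j ≠ i) : toGL (transvection h (2 : ℤ)) ∈ H := by
    have := hcol j h
    rwa [X_eq_transvection, ← map_pow, ← zpow_natCast, transvection_zpow, Nat.cast_ofNat,
      smul_eq_mul, mul_one] at this
  rw [evenElementarySubgroup, Subgroup.closure_le]
  rintro _ (⟨a, b, hab, rfl⟩ | ⟨c, rfl⟩)
  · obtain rfl | hai := eq_or_ne a i
    · exact hrow' b hab 2
    obtain rfl | hbi := eq_or_ne b i
    · exact hcol' a hab
    · rw [← mul_one (2 : ℤ), ← commutator_transvection hai hbi.symm hab, map_commutatorElement,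
        commutatorElement_def]
      exact mul_mem (mul_mem (mul_mem (hcol' a hai) (hrow' b hbi.symm 1))
        (inv_mem (hcol' a hai))) (inv_mem (hrow' b hbi.symm 1))
  · exact hT c

end Gamma2

theorem gamma2_le_closure_of_fixed_row_column_general (r : ℕ) (i : Fin r) :
    Gamma2 r ≤
      Subgroup.closure
        ({A | ∃ k : Fin r, ∃ h : i ≠ k, A = (X i k h).toGL} ∪
         {A | ∃ j : Fin r, ∃ h : j ≠ i, A = (X j i h).toGL ^ 2} ∪
         {A | ∃ j : Fin r, A = T j}) :=
  Gamma2_le_evenElementarySubgroup.trans <| evenElementarySubgroup_le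
    (fun k h ↦ Subgroup.subset_closure (Or.inl (Or.inl ⟨k, h, rfl⟩)))
    (fun j h ↦ Subgroup.subset_closure (Or.inl (Or.inr ⟨j, h, rfl⟩)))
    (fun j ↦ Subgroup.subset_closure (Or.inr ⟨j, rfl⟩))

theorem gamma2_le_closure_of_fixed_row_column (r : ℕ) (hr : 3 ≤ r) (i : Fin r) :
    Gamma2 r ≤
      Subgroup.closure
        ({A | ∃ k : Fin r, ∃ h : i ≠ k, A = (X i k h).toGL} ∪
         {A | ∃ j : Fin r, ∃ h : j ≠ i, A = (X j i h).toGL ^ 2} ∪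
         {A | ∃ j : Fin r, A = T j}) :=
  gamma2_le_closure_of_fixed_row_column_general r i
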